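/- arXiv:math/0004113 — 2 statements merged into one kernel-verified Lean document; each statement's English description precedes it below -/
import Mathlib

section
/- Let r > 0 be an integer and let (λ_1, λ_2, …, λ_{r+1}) be a partition, i.e. λ_1 ≥ λ_2 ≥ … ≥ λ_{r+1} ≥ 0. Then, in the polynomial ring of symmetric polynomials in N variables, s_{(λ_1,…,λ_r)} · s_{(λ_2,…,λ_{r+1})} = s_{(λ_2,…,λ_r)} · s_{(λ_1,…,λ_{r+1})} + s_{(λ_2−1,…,λ_{r+1}−1)} · s_{(λ_1+1,…,λ_r+1)}. -/
/-- The complete homogeneous symmetric polynomial of degree `m` in `N` variables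
over `ℤ`, with `h 0 = 1` and `h m = 0` for `m < 0`. -/
noncomputable def hciz (N : ℕ) (m : ℤ) : MvPolynomial (Fin N) ℤ :=
  if 0 ≤ m then MvPolynomial.hsymm (Fin N) ℤ m.toNat else 0

/-- The Schur function of a finite integer sequence `μ = (μ 0, …, μ (r-1))`,
defined via the Jacobi–Trudi formula as the determinant of the `r × r` matrix
with `(i, j)` entry `h_{μ i − i + j}` (for the empty sequence this is `1`). -/
noncomputable def schur (N r : ℕ) (μ : Fin r → ℤ) : MvPolynomial (Fin N) ℤ :=
  (Matrix.of fun i j : Fin r => hciz N (μ i - (i : ℕ) + (j : ℕ))).det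

namespace SchurCondensation

open Matrix Equiv Equiv.Perm

variable {R : Type*} [CommRing R]

/-- Minor: remove row `i` and column `j`. -/
def minor {k : ℕ} (M : Matrix (Fin (k + 2)) (Fin (k + 2)) R) (i j : Fin (k + 2)) :
    Matrix (Fin (k + 1)) (Fin (k + 1)) R :=
  M.submatrix i.succAbove j.succAbove

/-- Interior: remove first and last rows and columns. -/
def inter {k : ℕ} (M : Matrix (Fin (k + 2)) (Fin (k + 2)) R) : Matrix (Fin k) (Fin k) R :=
  M.submatrix (fun i => i.castSucc.succ) (fun j => j.castSucc.succ)

/-- The "cofactor columns" matrix used in the proof of Dodgson condensation. -/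
def cmat {k : ℕ} (M : Matrix (Fin (k + 2)) (Fin (k + 2)) R) :
    Matrix (Fin (k + 2)) (Fin (k + 2)) R :=
  Matrix.of fun i j =>
    if j = 0 then (-1 : R) ^ (i : ℕ) * (minor M 0 i).det
    else if j = Fin.last (k + 1) then
      (-1 : R) ^ ((k + 1) + (i : ℕ)) * (minor M (Fin.last (k + 1)) i).det
    else if i = j then 1 else 0

/-- The result of `M * cmat M`. -/
def dmat {k : ℕ} (M : Matrix (Fin (k + 2)) (Fin (k + 2)) R) :
    Matrix (Fin (k + 2)) (Fin (k + 2)) R :=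
  Matrix.of fun i j =>
    if j = 0 then (if i = 0 then M.det else 0)
    else if j = Fin.last (k + 1) then (if i = Fin.last (k + 1) then M.det else 0)
    else M i j

lemma hlast0 {k : ℕ} : (Fin.last (k + 1) : Fin (k + 2)) ≠ 0 :=
  Fin.last_pos'.ne'

lemma updateRow_det {k : ℕ} (M : Matrix (Fin (k + 2)) (Fin (k + 2)) R) (p : Fin (k + 2))
    (v : Fin (k + 2) → R) :
    (M.updateRow p v).det
      = ∑ x : Fin (k + 2), (-1 : R) ^ ((p : ℕ) + (x : ℕ)) * v x * (minor M p x).det := by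
  rw [det_succ_row _ p]
  refine Finset.sum_congr rfl fun x _ => ?_
  have h1 : (M.updateRow p v) p x = v x := by simp
  have h2 : (M.updateRow p v).submatrix p.succAbove x.succAbove = minor M p x := by
    ext a b
    simp [minor, Matrix.updateRow_ne (Fin.succAbove_ne p a)]
  rw [h1, h2]

lemma cmat_col0 {k : ℕ} (M : Matrix (Fin (k + 2)) (Fin (k + 2)) R) (i : Fin (k + 2)) :
    cmat M i 0 = (-1 : R) ^ (i : ℕ) * (minor M 0 i).det := by
  simp only [cmat, Matrix.of_apply, eq_self_iff_true, if_true]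

lemma cmat_collast {k : ℕ} (M : Matrix (Fin (k + 2)) (Fin (k + 2)) R) (i : Fin (k + 2)) :
    cmat M i (Fin.last (k + 1))
      = (-1 : R) ^ ((k + 1) + (i : ℕ)) * (minor M (Fin.last (k + 1)) i).det := by
  simp only [cmat, Matrix.of_apply, if_neg hlast0, eq_self_iff_true, if_true]

lemma cmat_mid {k : ℕ} (M : Matrix (Fin (k + 2)) (Fin (k + 2)) R) (i j : Fin (k + 2))
    (hj0 : j ≠ 0) (hjl : j ≠ Fin.last (k + 1)) :
    cmat M i j = if i = j then 1 else 0 := by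
  simp only [cmat, Matrix.of_apply, if_neg hj0, if_neg hjl]

lemma mul_cmat {k : ℕ} (M : Matrix (Fin (k + 2)) (Fin (k + 2)) R) :
    M * cmat M = dmat M := by
  ext i j
  rw [Matrix.mul_apply]
  by_cases hj0 : j = 0
  · subst hj0
    have hsum : ∑ x : Fin (k + 2), M i x * cmat M x 0
        = (M.updateRow 0 (M i)).det := by
      rw [updateRow_det]
      refine Finset.sum_congr rfl fun x _ => ?_
      rw [cmat_col0]
      ring_nf
      rw [show ((0 : Fin (k + 2)) : ℕ) = 0 from rfl]
      ring
    rw [hsum]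
    by_cases hi : i = 0
    · subst hi
      rw [Matrix.updateRow_eq_self]
      simp [dmat]
    · rw [Matrix.det_zero_of_row_eq (Ne.symm hi)
        (by rw [Matrix.updateRow_self, Matrix.updateRow_ne hi])]
      simp [dmat, hi]
  · by_cases hjl : j = Fin.last (k + 1)
    · subst hjl
      have hsum : ∑ x : Fin (k + 2), M i x * cmat M x (Fin.last (k + 1))
          = (M.updateRow (Fin.last (k + 1)) (M i)).det := by
        rw [updateRow_det]
        refine Finset.sum_congr rfl fun x _ => ?_
        rw [cmat_collast]
        rw [show ((Fin.last (k + 1) : Fin (k + 2)) : ℕ) = k + 1 from rfl]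
        ring
      rw [hsum]
      by_cases hi : i = Fin.last (k + 1)
      · subst hi
        rw [Matrix.updateRow_eq_self]
        simp [dmat, hlast0]
      · rw [Matrix.det_zero_of_row_eq (Ne.symm hi)
          (by rw [Matrix.updateRow_self, Matrix.updateRow_ne hi])]
        simp [dmat, hi, hlast0]
    · have hc : ∀ x, cmat M x j = if x = j then 1 else 0 := fun x =>
        cmat_mid M x j hj0 hjl
      simp only [hc, mul_ite, mul_one, mul_zero]
      rw [Finset.sum_ite_eq' Finset.univ j (M i)]
      simp [dmat, hj0, hjl]

lemma perm_classify {k : ℕ} (σ : Perm (Fin (k + 2)))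
    (h : ∀ j : Fin (k + 2), j ≠ 0 → j ≠ Fin.last (k + 1) → σ j = j) :
    σ = 1 ∨ σ = Equiv.swap 0 (Fin.last (k + 1)) := by
  have h0 : σ 0 = 0 ∨ σ 0 = Fin.last (k + 1) := by
    by_contra hc
    push_neg at hc
    have h1 : σ (σ 0) = σ 0 := h (σ 0) hc.1 hc.2
    have h2 : σ 0 = 0 := σ.injective h1
    exact hc.1 h2
  have hl : σ (Fin.last (k + 1)) = 0 ∨ σ (Fin.last (k + 1)) = Fin.last (k + 1) := by
    by_contra hc
    push_neg at hc
    have h1 : σ (σ (Fin.last (k + 1))) = σ (Fin.last (k + 1)) :=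
      h (σ (Fin.last (k + 1))) hc.1 hc.2
    have h2 : σ (Fin.last (k + 1)) = Fin.last (k + 1) := σ.injective h1
    exact hc.2 h2
  rcases h0 with h0 | h0
  · left
    have hll : σ (Fin.last (k + 1)) = Fin.last (k + 1) := by
      rcases hl with hl | hl
      · exact absurd (σ.injective (hl.trans h0.symm)) hlast0
      · exact hl
    refine Equiv.ext fun j => ?_
    simp only [Perm.one_apply]
    by_cases hj0 : j = 0
    · subst hj0; exact h0
    · by_cases hjl : j = Fin.last (k + 1)
      · subst hjl; exact hll
      · exact h j hj0 hjl
  · right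
    have hll : σ (Fin.last (k + 1)) = 0 := by
      rcases hl with hl | hl
      · exact hl
      · exact absurd (σ.injective (h0.trans hl.symm)) hlast0.symm
    refine Equiv.ext fun j => ?_
    by_cases hj0 : j = 0
    · subst hj0; rw [Equiv.swap_apply_left]; exact h0
    · by_cases hjl : j = Fin.last (k + 1)
      · subst hjl; rw [Equiv.swap_apply_right]; exact hll
      · rw [Equiv.swap_apply_of_ne_of_ne hj0 hjl]; exact h j hj0 hjl

lemma det_cmat {k : ℕ} (M : Matrix (Fin (k + 2)) (Fin (k + 2)) R) :
    (cmat M).det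
      = (minor M 0 0).det * (minor M (Fin.last (k + 1)) (Fin.last (k + 1))).det
        - (minor M 0 (Fin.last (k + 1))).det * (minor M (Fin.last (k + 1)) 0).det := by
  have h0l : (0 : Fin (k + 2)) ≠ Fin.last (k + 1) := hlast0.symm
  have hne : (1 : Perm (Fin (k + 2))) ≠ Equiv.swap 0 (Fin.last (k + 1)) := by
    intro hc
    have h2 : (0 : Fin (k + 2)) = Fin.last (k + 1) := by
      have h3 := congrArg (fun e : Perm (Fin (k + 2)) => e 0) hc
      simpa [Equiv.swap_apply_left] using h3
    exact h0l h2
  rw [Matrix.det_apply']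
  rw [Finset.sum_eq_add_of_mem (1 : Perm (Fin (k + 2))) (Equiv.swap 0 (Fin.last (k + 1)))
    (Finset.mem_univ _) (Finset.mem_univ _) hne
    (by
      intro σ _ hσ
      have hex : ∃ j : Fin (k + 2), j ≠ 0 ∧ j ≠ Fin.last (k + 1) ∧ σ j ≠ j := by
        by_contra hc
        push_neg at hc
        rcases perm_classify σ hc with h | h
        · exact hσ.1 h
        · exact hσ.2 h
      obtain ⟨j, hj0, hjl, hj⟩ := hex
      have hz : cmat M (σ j) j = 0 := by
        rw [cmat_mid M _ j hj0 hjl, if_neg hj]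
      rw [Finset.prod_eq_zero (f := fun i => cmat M (σ i) i) (Finset.mem_univ j) hz, mul_zero])]
  have hp1 : (∏ i : Fin (k + 2), cmat M ((1 : Perm (Fin (k + 2))) i) i)
      = cmat M 0 0 * cmat M (Fin.last (k + 1)) (Fin.last (k + 1)) := by
    refine Finset.prod_eq_mul_of_mem 0 (Fin.last (k + 1)) (Finset.mem_univ _)
      (Finset.mem_univ _) h0l (fun c _ hc => ?_)
    simp only [Perm.one_apply]
    rw [cmat_mid M c c hc.1 hc.2, if_pos rfl]
  have hp2 : (∏ i : Fin (k + 2), cmat M (Equiv.swap 0 (Fin.last (k + 1)) i) i)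
      = cmat M (Fin.last (k + 1)) 0 * cmat M 0 (Fin.last (k + 1)) := by
    refine (Finset.prod_eq_mul_of_mem 0 (Fin.last (k + 1)) (Finset.mem_univ _)
      (Finset.mem_univ _) h0l (fun c _ hc => ?_)).trans ?_
    · rw [Equiv.swap_apply_of_ne_of_ne hc.1 hc.2]
      rw [cmat_mid M c c hc.1 hc.2, if_pos rfl]
    · rw [Equiv.swap_apply_left, Equiv.swap_apply_right]
  rw [hp1, hp2]
  have hsign1 : (((Perm.sign (1 : Perm (Fin (k + 2)))) : ℤ) : R) = 1 := by simp
  have hsign2 : (((Perm.sign (Equiv.swap (0 : Fin (k + 2)) (Fin.last (k + 1)))) : ℤ) : R)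
      = -1 := by
    rw [Equiv.Perm.sign_swap h0l]; simp
  rw [hsign1, hsign2]
  rw [cmat_col0, cmat_col0, cmat_collast, cmat_collast]
  rw [show ((0 : Fin (k + 2)) : ℕ) = 0 from rfl,
    show ((Fin.last (k + 1) : Fin (k + 2)) : ℕ) = k + 1 from rfl]
  have hev : ((-1 : R) ^ (k + 1)) * ((-1 : R) ^ (k + 1)) = 1 := by
    rw [← pow_add]
    exact Even.neg_one_pow ⟨k + 1, by ring⟩
  have hev2 : ((-1 : R) ^ (k + 1 + (k + 1))) = 1 := Even.neg_one_pow ⟨k + 1, by ring⟩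
  rw [hev2]
  linear_combination (-((minor M 0 (Fin.last (k + 1))).det
    * (minor M (Fin.last (k + 1)) 0).det)) * hev

lemma det_dmat {k : ℕ} (M : Matrix (Fin (k + 2)) (Fin (k + 2)) R) :
    (dmat M).det = M.det * (M.det * (inter M).det) := by
  rw [det_succ_column_zero (dmat M)]
  rw [Finset.sum_eq_single_of_mem 0 (Finset.mem_univ _) (fun i _ hi => by
    have : dmat M i 0 = 0 := by simp [dmat, hi]
    rw [this, mul_zero, zero_mul])]
  have h00 : dmat M 0 0 = M.det := by simp [dmat]
  rw [h00, Fin.succAbove_zero]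
  have hD' : ((dmat M).submatrix Fin.succ Fin.succ).det = M.det * (inter M).det := by
    rw [det_succ_column ((dmat M).submatrix Fin.succ Fin.succ) (Fin.last k)]
    rw [Finset.sum_eq_single_of_mem (Fin.last k) (Finset.mem_univ _) (fun i _ hi => by
      have hne : i.succ ≠ Fin.last (k + 1) := by
        rw [← Fin.succ_last]
        exact fun h => hi (Fin.succ_injective _ h)
      have hz : (dmat M).submatrix Fin.succ Fin.succ i (Fin.last k) = 0 := by
        simp [dmat, Fin.succ_last, hne, Fin.succ_ne_zero]
      rw [hz, mul_zero, zero_mul])]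
    have hll : (dmat M).submatrix Fin.succ Fin.succ (Fin.last k) (Fin.last k) = M.det := by
      simp [dmat, Fin.succ_last, hlast0]
    rw [hll, Fin.succAbove_last]
    have hsub : ((dmat M).submatrix Fin.succ Fin.succ).submatrix Fin.castSucc Fin.castSucc
        = inter M := by
      ext i j
      have hne1 : (j.castSucc.succ : Fin (k + 2)) ≠ 0 := Fin.succ_ne_zero _
      have hne2 : (j.castSucc.succ : Fin (k + 2)) ≠ Fin.last (k + 1) := by
        intro h
        have h2 : ((j.castSucc.succ : Fin (k + 2)) : ℕ) = k + 1 := by rw [h]; rfl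
        simp only [Fin.val_succ, Fin.coe_castSucc] at h2
        have := j.isLt
        omega
      simp [dmat, inter, hne1, hne2]
    rw [hsub]
    have hpow : (-1 : R) ^ ((Fin.last k : ℕ) + (Fin.last k : ℕ)) = 1 :=
      Even.neg_one_pow ⟨(Fin.last k : ℕ), by ring⟩
    rw [hpow]
    ring
  rw [hD']
  rw [show ((0 : Fin (k + 2)) : ℕ) = 0 from rfl]
  ring

lemma dodgson_aux {k : ℕ} (M : Matrix (Fin (k + 2)) (Fin (k + 2)) R) :
    M.det * ((minor M 0 0).det * (minor M (Fin.last (k + 1)) (Fin.last (k + 1))).det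
      - (minor M 0 (Fin.last (k + 1))).det * (minor M (Fin.last (k + 1)) 0).det)
    = M.det * (M.det * (inter M).det) := by
  rw [← det_cmat, ← det_mul, mul_cmat, det_dmat]

lemma dodgson {S : Type*} [CommRing S] {k : ℕ} (M : Matrix (Fin (k + 2)) (Fin (k + 2)) S) :
    (minor M 0 0).det * (minor M (Fin.last (k + 1)) (Fin.last (k + 1))).det
      - (minor M 0 (Fin.last (k + 1))).det * (minor M (Fin.last (k + 1)) 0).det
    = M.det * (inter M).det := by
  set X : Matrix (Fin (k + 2)) (Fin (k + 2)) (MvPolynomial (Fin (k + 2) × Fin (k + 2)) ℤ) :=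
    Matrix.mvPolynomialX (Fin (k + 2)) (Fin (k + 2)) ℤ with hX
  have hgen : (minor X 0 0).det * (minor X (Fin.last (k + 1)) (Fin.last (k + 1))).det
      - (minor X 0 (Fin.last (k + 1))).det * (minor X (Fin.last (k + 1)) 0).det
      = X.det * (inter X).det :=
    mul_left_cancel₀ (Matrix.det_mvPolynomialX_ne_zero (Fin (k + 2)) ℤ) (dodgson_aux X)
  set φ : MvPolynomial (Fin (k + 2) × Fin (k + 2)) ℤ →+* S :=
    MvPolynomial.eval₂Hom (Int.castRingHom S) (fun p => M p.1 p.2) with hφ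
  have hXM : X.map φ = M := by
    ext i j
    simp [hX, Matrix.mvPolynomialX_apply, hφ]
  have hminor : ∀ a b, φ ((minor X a b).det) = (minor M a b).det := by
    intro a b
    have hmap : (minor X a b).map φ = minor M a b := by rw [← hXM]; rfl
    rw [RingHom.map_det, RingHom.mapMatrix_apply, hmap]
  have hinter : φ ((inter X).det) = (inter M).det := by
    have hmap : (inter X).map φ = inter M := by rw [← hXM]; rfl
    rw [RingHom.map_det, RingHom.mapMatrix_apply, hmap]
  have hdet : φ X.det = M.det := by
    rw [RingHom.map_det, RingHom.mapMatrix_apply, hXM]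
  have := congrArg φ hgen
  rw [map_sub, _root_.map_mul, _root_.map_mul, _root_.map_mul, hminor, hminor, hminor, hminor, hinter, hdet] at this
  exact this

end SchurCondensation

/-- For a partition `λ_1 ≥ λ_2 ≥ … ≥ λ_{r+1} ≥ 0` (with `r > 0`),
`s_{(λ_1,…,λ_r)} · s_{(λ_2,…,λ_{r+1})}
  = s_{(λ_2,…,λ_r)} · s_{(λ_1,…,λ_{r+1})}
    + s_{(λ_2−1,…,λ_{r+1}−1)} · s_{(λ_1+1,…,λ_r+1)}`. -/
theorem schur_condensation (N : ℕ) (hN : 1 ≤ N) (r : ℕ) (hr : 0 < r)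
    (lam : Fin (r + 1) → ℤ) (hlam : Antitone lam) (hpos : 0 ≤ lam (Fin.last r)) :
    schur N r (fun i => lam i.castSucc) * schur N r (fun i => lam i.succ)
    = schur N (r - 1) (fun i => lam ⟨(i : ℕ) + 1, by omega⟩) * schur N (r + 1) lam
      + schur N r (fun i => lam i.succ - 1) * schur N r (fun i => lam i.castSucc + 1) := by
  open SchurCondensation in
  obtain ⟨k, rfl⟩ : ∃ k, r = k + 1 := ⟨r - 1, by omega⟩
  set M : Matrix (Fin (k + 2)) (Fin (k + 2)) (MvPolynomial (Fin N) ℤ) :=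
    Matrix.of fun i j => hciz N (lam i - (i : ℕ) + (j : ℕ)) with hM
  have h1 : schur N (k + 1) (fun i => lam i.castSucc)
      = (minor M (Fin.last (k + 1)) (Fin.last (k + 1))).det := by
    apply congrArg Matrix.det
    ext i j
    simp only [minor, Matrix.submatrix_apply, Matrix.of_apply, hM, Fin.succAbove_last,
      Fin.coe_castSucc]
  have h2 : schur N (k + 1) (fun i => lam i.succ) = (minor M 0 0).det := by
    apply congrArg Matrix.det
    ext i j
    simp only [minor, Matrix.submatrix_apply, Matrix.of_apply, hM, Fin.succAbove_zero]
    congr 1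
    push_cast [Fin.val_succ]
    try ring
  have h3 : schur N (k + 1 - 1) (fun i => lam ⟨(i : ℕ) + 1, by omega⟩) = (inter M).det := by
    apply congrArg Matrix.det
    ext i j
    simp only [inter, Matrix.submatrix_apply, Matrix.of_apply, hM]
    have hl : lam ⟨(i : ℕ) + 1, by omega⟩ = lam (i.castSucc.succ) := by
      congr 1
      all_goals simp [Fin.ext_iff]
    rw [hl]
    congr 1
    push_cast [Fin.val_succ, Fin.coe_castSucc]
    try ring
  have h4 : schur N (k + 1 + 1) lam = M.det := rfl
  have h5 : schur N (k + 1) (fun i => lam i.succ - 1)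
      = (minor M 0 (Fin.last (k + 1))).det := by
    apply congrArg Matrix.det
    ext i j
    simp only [minor, Matrix.submatrix_apply, Matrix.of_apply, hM, Fin.succAbove_zero,
      Fin.succAbove_last]
    congr 1
    push_cast [Fin.val_succ, Fin.coe_castSucc]
    try ring
  have h6 : schur N (k + 1) (fun i => lam i.castSucc + 1)
      = (minor M (Fin.last (k + 1)) 0).det := by
    apply congrArg Matrix.det
    ext i j
    simp only [minor, Matrix.submatrix_apply, Matrix.of_apply, hM, Fin.succAbove_zero,
      Fin.succAbove_last]
    congr 1
    push_cast [Fin.val_succ, Fin.coe_castSucc]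
    try ring
  rw [h1, h2, h3, h4, h5, h6]
  linear_combination SchurCondensation.dodgson M
end

section
/- Let c, r be positive integers and let [c^r] denote the partition consisting of r parts all equal to c. Then, in the polynomial ring of symmetric polynomials in N variables, (s_{[c^r]})^2 = s_{[c^{r−1}]} · s_{[c^{r+1}]} + s_{[(c−1)^r]} · s_{[(c+1)^r]}. -/
namespace Matrix

section Jacobi

variable {m n R : Type*} [Fintype m] [Fintype n] [DecidableEq m] [DecidableEq n] [CommRing R]

theorem det_toBlocks₁₁_adjugate_mul_det (A : Matrix (m ⊕ n) (m ⊕ n) R) :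
    A.adjugate.toBlocks₁₁.det * A.det = A.det ^ Fintype.card m * A.toBlocks₂₂.det := by
  have hmul : A * fromBlocks A.adjugate.toBlocks₁₁ 0 A.adjugate.toBlocks₂₁ 1 =
      fromBlocks (A.det • 1) A.toBlocks₁₂ 0 A.toBlocks₂₂ := by
    have h := A.mul_adjugate
    nth_rewrite 1 [← A.fromBlocks_toBlocks] at h ⊢
    rw [← A.adjugate.fromBlocks_toBlocks, fromBlocks_multiply,
      ← (A.det • (1 : Matrix (m ⊕ n) (m ⊕ n) R)).fromBlocks_toBlocks, fromBlocks_inj] at h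
    rw [fromBlocks_multiply, h.1, h.2.2.1]
    simp [smul_one_eq_diagonal, toBlocks₁₁_diagonal]
  calc A.adjugate.toBlocks₁₁.det * A.det
      = (A * fromBlocks A.adjugate.toBlocks₁₁ 0 A.adjugate.toBlocks₂₁ 1).det := by
        rw [det_mul, det_fromBlocks_zero₁₂, det_one, mul_one, mul_comm]
    _ = A.det ^ Fintype.card m * A.toBlocks₂₂.det := by
        rw [hmul, det_fromBlocks_zero₂₁, det_smul, det_one, mul_one]

theorem det_toBlocks₁₁_adjugate [Nonempty m] (A : Matrix (m ⊕ n) (m ⊕ n) R) :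
    A.adjugate.toBlocks₁₁.det = A.det ^ (Fintype.card m - 1) * A.toBlocks₂₂.det := by
  let G := mvPolynomialX (m ⊕ n) (m ⊕ n) ℤ
  suffices G.adjugate.toBlocks₁₁.det = G.det ^ (Fintype.card m - 1) * G.toBlocks₂₂.det by
    rw [← mvPolynomialX_mapMatrix_aeval ℤ A, ← AlgHom.map_adjugate]
    have h := congrArg (MvPolynomial.aeval fun p : (m ⊕ n) × (m ⊕ n) ↦ A p.1 p.2) this
    rwa [map_mul, map_pow, AlgHom.map_det, AlgHom.map_det, AlgHom.map_det] at h
  apply mul_right_cancel₀ (det_mvPolynomialX_ne_zero (m ⊕ n) ℤ)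
  rw [det_toBlocks₁₁_adjugate_mul_det, mul_right_comm, pow_sub_one_mul Fintype.card_ne_zero]

end Jacobi

noncomputable def finEndsSumMiddleEquiv (n : ℕ) : Fin 2 ⊕ Fin n ≃ Fin (n + 2) :=
  Equiv.ofBijective (Sum.elim ![0, Fin.last (n + 1)] fun k => k.castSucc.succ) <| by
    rw [Fintype.bijective_iff_injective_and_card]
    refine ⟨?_, by simp [add_comm]⟩
    rintro (i | i) (j | j) h <;> (try fin_cases i) <;> (try fin_cases j) <;>
      simp_all [Fin.ext_iff] <;> omega

theorem desnanot_jacobi {R : Type*} [CommRing R] {n : ℕ}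
    (A : Matrix (Fin (n + 2)) (Fin (n + 2)) R) :
    A.det * (A.submatrix (fun k : Fin n => k.castSucc.succ) fun k => k.castSucc.succ).det =
      (A.submatrix Fin.castSucc Fin.castSucc).det * (A.submatrix Fin.succ Fin.succ).det -
        (A.submatrix Fin.castSucc Fin.succ).det * (A.submatrix Fin.succ Fin.castSucc).det := by
  have h := det_toBlocks₁₁_adjugate
    (A.submatrix (finEndsSumMiddleEquiv n) (finEndsSumMiddleEquiv n))
  have hmid : (A.submatrix (finEndsSumMiddleEquiv n) (finEndsSumMiddleEquiv n)).toBlocks₂₂ =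
      A.submatrix (fun k : Fin n => k.castSucc.succ) fun k => k.castSucc.succ := rfl
  have hsign : (-1 : R) ^ (n + 1) * (-1) ^ (n + 1) = 1 := by rw [← mul_pow]; simp
  rw [hmid, adjugate_submatrix_equiv_self, det_submatrix_equiv_self, det_fin_two] at h
  simp [toBlocks₁₁, finEndsSumMiddleEquiv, adjugate_fin_succ_eq_det_submatrix] at h
  linear_combination
    -h - (A.submatrix Fin.castSucc Fin.succ).det * (A.submatrix Fin.succ Fin.castSucc).det * hsign

end Matrix

theorem schur_eq_det_submatrix (N : ℕ) {r s : ℕ} (μ : Fin s → ℤ) (ν : Fin r → ℤ)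
    (f g : Fin r → Fin s)
    (hfg : ∀ i j, μ (f i) - (f i : ℕ) + (g j : ℕ) = ν i - (i : ℕ) + (j : ℕ)) :
    schur N r ν =
      ((Matrix.of fun i j : Fin s => hciz N (μ i - (i : ℕ) + (j : ℕ))).submatrix f g).det := by
  simp only [schur, Matrix.submatrix, Matrix.of_apply, hfg]

theorem schur_rectangle_condensation_general (N : ℕ) (c r : ℕ) (hr : 0 < r) :
    schur N r (fun _ => (c : ℤ)) ^ 2
    = schur N (r - 1) (fun _ => (c : ℤ)) * schur N (r + 1) (fun _ => (c : ℤ))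
      + schur N r (fun _ => (c : ℤ) - 1) * schur N r (fun _ => (c : ℤ) + 1) := by
  obtain ⟨n, rfl⟩ : ∃ n, r = n + 1 := ⟨r - 1, by omega⟩
  have key := Matrix.desnanot_jacobi
    (Matrix.of fun i j : Fin (n + 2) => hciz N ((c : ℤ) - (i : ℕ) + (j : ℕ)))
  change schur N (n + 2) (fun _ => c) * _ = _ at key
  rw [← schur_eq_det_submatrix N _ (fun _ => c) (fun k : Fin n => k.castSucc.succ)
      (fun k => k.castSucc.succ),
    ← schur_eq_det_submatrix N _ (fun _ => c) Fin.castSucc Fin.castSucc,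
    ← schur_eq_det_submatrix N _ (fun _ => c) Fin.succ Fin.succ,
    ← schur_eq_det_submatrix N _ (fun _ => c + 1) Fin.castSucc Fin.succ,
    ← schur_eq_det_submatrix N _ (fun _ => c - 1) Fin.succ Fin.castSucc] at key
  · rw [Nat.add_sub_cancel]
    linear_combination -key
  all_goals intros; push_cast [Fin.val_succ, Fin.val_castSucc]; ring

/-- **Kirillov's identity.** For positive integers `c, r`, with `[c^r]` the
partition consisting of `r` parts all equal to `c`:
`(s_{[c^r]})² = s_{[c^{r−1}]} · s_{[c^{r+1}]} + s_{[(c−1)^r]} · s_{[(c+1)^r]}`. -/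
theorem schur_rectangle_condensation (N : ℕ) (hN : 1 ≤ N) (c r : ℕ)
    (hc : 0 < c) (hr : 0 < r) :
    schur N r (fun _ => (c : ℤ)) ^ 2
    = schur N (r - 1) (fun _ => (c : ℤ)) * schur N (r + 1) (fun _ => (c : ℤ))
      + schur N r (fun _ => (c : ℤ) - 1) * schur N r (fun _ => (c : ℤ) + 1) :=
  schur_rectangle_condensation_general N c r hr
end
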